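/- arXiv:2312.11141 — 10 statements merged into one kernel-verified Lean document; each statement's English description precedes it below -/
import Mathlib

section
/- Every echeloned space on a countable set is metrizable, i.e., its echelon relation is induced by some metric. -/
/-- An echeloned space: a total preorder on `X × X` satisfying the three echelon axioms. -/
def IsEcheloned {X : Type*} (le : X × X → X × X → Prop) : Prop :=
  (∀ p, le p p) ∧ (∀ p q r, le p q → le q r → le p r) ∧
  (∀ p q, le p q ∨ le q p) ∧
  (∀ x y z : X, le (x, x) (y, z)) ∧
  (∀ x y z : X, le (y, z) (x, x) → y = z) ∧
  (∀ x y : X, le (x, y) (y, x))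

/-- `d` is a metric on `X`. -/
def IsMetric {X : Type*} (d : X → X → ℝ) : Prop :=
  (∀ x y, d x y = 0 ↔ x = y) ∧ (∀ x y, d x y = d y x) ∧
  (∀ x y z, d x z ≤ d x y + d y z)

/-- The metric `d` induces the echelon `le`. -/
def InducesEchelon {X : Type*} (d : X → X → ℝ) (le : X × X → X × X → Prop) : Prop :=
  ∀ p q : X × X, le p q ↔ d p.1 p.2 ≤ d q.1 q.2

/-- A dull metric. -/
def IsDull {X : Type*} (d : X → X → ℝ) : Prop :=
  ∀ x x' y y' z z' : X, y ≠ y' → z ≠ z' → d x x' ≤ d y y' + d z z'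

/-- Every echeloned space on a countable set is metrizable. -/
theorem countable_echeloned_metrizable {X : Type*} [Nonempty X] [Countable X]
    (le : X × X → X × X → Prop) (h : IsEcheloned le) :
    ∃ d : X → X → ℝ, IsMetric d ∧ InducesEchelon d le := by
  classical
  obtain ⟨hrefl, htrans, htotal, hbot, hdiag, hsymm⟩ := h
  obtain ⟨e, he⟩ := exists_surjective_nat (X × X)
  set g : X × X → ℝ := fun p => ∑' n, if le (e n) p then ((1:ℝ)/2)^n else 0 with hg
  have hgeo : Summable (fun n : ℕ => ((1:ℝ)/2)^n) :=
    summable_geometric_of_lt_one (by norm_num) (by norm_num)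
  have hterm_nonneg : ∀ p n, (0:ℝ) ≤ if le (e n) p then ((1:ℝ)/2)^n else 0 := by
    intro p n; split <;> positivity
  have hterm_le : ∀ p n, (if le (e n) p then ((1:ℝ)/2)^n else 0) ≤ ((1:ℝ)/2)^n := by
    intro p n; split
    · exact le_rfl
    · positivity
  have hsum : ∀ p, Summable (fun n => if le (e n) p then ((1:ℝ)/2)^n else 0) := by
    intro p
    exact hgeo.of_nonneg_of_le (hterm_nonneg p) (hterm_le p)
  have hg_nonneg : ∀ p, 0 ≤ g p := fun p => tsum_nonneg (hterm_nonneg p)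
  have hg_le : ∀ p, g p ≤ 2 := by
    intro p
    calc g p ≤ ∑' n : ℕ, ((1:ℝ)/2)^n := Summable.tsum_le_tsum (hterm_le p) (hsum p) hgeo
    _ = 2 := by rw [tsum_geometric_of_lt_one (by norm_num) (by norm_num)]; norm_num
  have hmono : ∀ p q, le p q → g p ≤ g q := by
    intro p q hpq
    apply Summable.tsum_le_tsum _ (hsum p) (hsum q)
    intro n
    by_cases h1 : le (e n) p
    · simp only [h1, if_true, htrans _ _ _ h1 hpq, if_true]; exact le_rfl
    · simp only [h1, if_false]; exact hterm_nonneg q n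
  have hstrict : ∀ p q, ¬ le p q → g q < g p := by
    intro p q hnpq
    have hqp : le q p := (htotal p q).resolve_left hnpq
    obtain ⟨n₀, hn₀⟩ := he p
    apply Summable.tsum_lt_tsum (i := n₀) _ _ (hsum q) (hsum p)
    · intro n
      by_cases h1 : le (e n) q
      · simp only [h1, if_true, htrans _ _ _ h1 hqp, if_true]; exact le_rfl
      · simp only [h1, if_false]; exact hterm_nonneg p n
    · rw [hn₀]
      simp only [hnpq, if_false, hrefl, if_true]
      positivity
  have hiff : ∀ p q, le p q ↔ g p ≤ g q := by
    intro p q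
    constructor
    · exact hmono p q
    · intro hle
      by_contra hn
      exact absurd hle (not_le.mpr (hstrict p q hn))
  set d : X → X → ℝ := fun x y => if x = y then 0 else 1 + g (x, y) / 2 with hd
  have hd_nonneg : ∀ x y, 0 ≤ d x y := by
    intro x y; simp only [hd]; split
    · exact le_rfl
    · have := hg_nonneg (x, y); linarith
  have hd_ge : ∀ x y, x ≠ y → 1 ≤ d x y := by
    intro x y hxy; simp only [hd, if_neg hxy]
    have := hg_nonneg (x, y); linarith
  have hd_le : ∀ x y, d x y ≤ 2 := by
    intro x y; simp only [hd]; split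
    · norm_num
    · have := hg_le (x, y); linarith
  have hgsymm : ∀ x y : X, g (x, y) = g (y, x) := by
    intro x y
    exact le_antisymm (hmono _ _ (hsymm x y)) (hmono _ _ (hsymm y x))
  refine ⟨d, ⟨?_, ?_, ?_⟩, ?_⟩
  · intro x y
    constructor
    · intro h0
      by_contra hxy
      have := hd_ge x y hxy
      linarith
    · intro h0; simp [hd, h0]
  · intro x y
    by_cases hxy : x = y
    · subst hxy; rfl
    · simp only [hd, if_neg hxy, if_neg (Ne.symm hxy), hgsymm x y]
  · intro x y z
    by_cases hxz : x = z
    · subst hxz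
      simp only [hd, if_pos rfl]
      linarith [hd_nonneg x y, hd_nonneg y x]
    · by_cases hxy : x = y
      · subst hxy
        simp only [hd, if_pos rfl]
        linarith [hd_nonneg x z]
      · by_cases hyz : y = z
        · subst hyz
          simp only [hd, if_pos rfl]
          linarith [hd_nonneg x y]
        · have := hd_ge x y hxy
          have := hd_ge y z hyz
          have := hd_le x z
          linarith
  · intro p q
    obtain ⟨a, b⟩ := p; obtain ⟨c, f⟩ := q
    by_cases hab : a = b
    · subst hab
      by_cases hcf : c = f
      · subst hcf
        simp only [hd, if_pos rfl]
        exact ⟨fun _ => le_refl _, fun _ => hbot a c c⟩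
      · simp only [hd, if_pos rfl, if_neg hcf]
        constructor
        · intro _; linarith [hg_nonneg (c, f)]
        · intro _; exact hbot a c f
    · by_cases hcf : c = f
      · subst hcf
        simp only [hd, if_neg hab, if_pos rfl]
        constructor
        · intro hle; exact absurd (hdiag c a b hle) hab
        · intro hle; exfalso; linarith [hg_nonneg (a, b)]
      · simp only [hd, if_neg hab, if_neg hcf]
        rw [hiff (a, b) (c, f)]
        constructor <;> intro <;> linarith
end

section
/- Let (X, d_X) and (Y, d_Y) be metric spaces inducing echelons ≤_X and ≤_Y, and let f : X → Y be a homomorphism of the induced echeloned spaces. If the image metric subspace (f[X], d_Y) is not uniformly discrete, then f is uniformly continuous. -/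
/-- If `f` is a homomorphism of echeloned spaces induced by metrics and its image
is not uniformly discrete, then `f` is uniformly continuous. -/
theorem echeloned_hom_uniformContinuous {X Y : Type*} [MetricSpace X] [MetricSpace Y]
    (f : X → Y)
    (hf : ∀ p q : X × X, dist p.1 p.2 ≤ dist q.1 q.2 →
      dist (f p.1) (f p.2) ≤ dist (f q.1) (f q.2))
    (hnud : ¬ ∃ c : ℝ, 0 < c ∧ ∀ x y : X, f x ≠ f y → c ≤ dist (f x) (f y)) :
    UniformContinuous f := by
  rw [Metric.uniformContinuous_iff]
  intro ε hε
  push_neg at hnud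
  obtain ⟨x, y, hne, hlt⟩ := hnud ε hε
  refine ⟨dist x y, ?_, fun {a b} hab => ?_⟩
  · exact dist_pos.2 fun h => hne (by rw [h])
  · exact lt_of_le_of_lt (hf (a, b) (x, y) hab.le) hlt
end

section
/- Every automorphism of the echeloned space induced by a metric space is uniformly continuous. -/
/-- Every automorphism of the echeloned space induced by a metric space is
uniformly continuous. -/
theorem echeloned_automorphism_uniformContinuous {X : Type*} [MetricSpace X]
    (f : X → X) (hbij : Function.Bijective f)
    (hf : ∀ p q : X × X, dist p.1 p.2 ≤ dist q.1 q.2 ↔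
      dist (f p.1) (f p.2) ≤ dist (f q.1) (f q.2)) :
    UniformContinuous f := by
  rw [Metric.uniformContinuous_iff]
  intro ε hε
  by_cases h : ∃ a b : X, 0 < dist (f a) (f b) ∧ dist (f a) (f b) < ε
  · obtain ⟨a, b, h1, h2⟩ := h
    have hfab : f a ≠ f b := by
      intro hh; rw [hh] at h1; simp at h1
    have hab : a ≠ b := fun hh => hfab (by rw [hh])
    refine ⟨dist a b, dist_pos.mpr hab, fun {x y} hxy => ?_⟩
    have h3 : ¬ dist a b ≤ dist x y := not_le.mpr hxy
    have h4 : ¬ dist (f a) (f b) ≤ dist (f x) (f y) :=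
      fun hh => h3 ((hf (a, b) (x, y)).mpr hh)
    exact lt_trans (not_le.mp h4) h2
  · push_neg at h
    refine ⟨ε, hε, fun {x y} hxy => ?_⟩
    obtain ⟨a, ha⟩ := hbij.2 x
    obtain ⟨b, hb⟩ := hbij.2 y
    have hh := h a b
    rw [ha, hb] at hh
    by_cases hd : 0 < dist x y
    · exact absurd (hh hd) (not_le.mpr hxy)
    · have hxy0 : x = y := dist_eq_zero.mp (le_antisymm (not_lt.mp hd) dist_nonneg)
      rw [hxy0]
      simpa using hε
end

section
/- Let (X, d) be a metric space whose set of realized distances d[X²] is well-ordered by ≤. Then the automorphism group of the induced echeloned space equals the isometry group of (X, d). In particular this holds for every finite metric space. -/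
private lemma echeloned_aux_le {X : Type*} [MetricSpace X]
    (hwf : (Set.range fun p : X × X => dist p.1 p.2).WellFoundedOn (· < ·))
    (f : X → X)
    (hmono : ∀ p q : X × X, dist p.1 p.2 < dist q.1 q.2 →
      dist (f p.1) (f p.2) < dist (f q.1) (f q.2)) :
    ∀ p : X × X, dist p.1 p.2 ≤ dist (f p.1) (f p.2) := by
  set D := Set.range fun p : X × X => dist p.1 p.2 with hD
  have H : ∀ a ∈ D, ∀ p : X × X, dist p.1 p.2 = a →
      dist p.1 p.2 ≤ dist (f p.1) (f p.2) := by
    intro a ha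
    refine hwf.induction (P := fun a => ∀ p : X × X, dist p.1 p.2 = a →
      dist p.1 p.2 ≤ dist (f p.1) (f p.2)) ha ?_
    intro a ha ih p hp
    by_contra hlt
    push_neg at hlt
    have hb : dist (f p.1) (f p.2) ∈ D := ⟨(f p.1, f p.2), rfl⟩
    have h1 := ih _ hb (hp ▸ hlt) (f p.1, f p.2) rfl
    have h2 := hmono (f p.1, f p.2) p (by simpa using hlt)
    simp only at h1 h2
    exact absurd h1 (not_le.mpr h2)
  intro p
  exact H _ ⟨p, rfl⟩ p rfl

private lemma echeloned_key {X : Type*} [MetricSpace X]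
    (hwf : (Set.range fun p : X × X => dist p.1 p.2).WellFoundedOn (· < ·))
    (f : X → X) (hb : Function.Bijective f)
    (h : ∀ p q : X × X,
      dist p.1 p.2 ≤ dist q.1 q.2 ↔ dist (f p.1) (f p.2) ≤ dist (f q.1) (f q.2)) :
    Isometry f := by
  obtain ⟨g, hgf, hfg⟩ := Function.bijective_iff_has_inverse.mp hb
  have hgf' : ∀ x, g (f x) = x := hgf
  have hfg' : ∀ x, f (g x) = x := hfg
  have hmono : ∀ p q : X × X, dist p.1 p.2 < dist q.1 q.2 →
      dist (f p.1) (f p.2) < dist (f q.1) (f q.2) := by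
    intro p q hpq
    by_contra hcon
    push_neg at hcon
    exact absurd ((h q p).mpr hcon) (not_le.mpr hpq)
  have hg : ∀ p q : X × X,
      dist p.1 p.2 ≤ dist q.1 q.2 ↔ dist (g p.1) (g p.2) ≤ dist (g q.1) (g q.2) := by
    intro p q
    have := h (g p.1, g p.2) (g q.1, g q.2)
    simp only [hfg'] at this
    exact this.symm
  have hgmono : ∀ p q : X × X, dist p.1 p.2 < dist q.1 q.2 →
      dist (g p.1) (g p.2) < dist (g q.1) (g q.2) := by
    intro p q hpq
    by_contra hcon
    push_neg at hcon
    exact absurd ((hg q p).mpr hcon) (not_le.mpr hpq)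
  have hA := echeloned_aux_le hwf f hmono
  have hB := echeloned_aux_le hwf g hgmono
  apply Isometry.of_dist_eq
  intro x y
  have h1 := hA (x, y)
  have h2 := hB (f x, f y)
  simp only [hgf'] at h2
  exact le_antisymm h2 h1

private lemma echeloned_main (X : Type*) [MetricSpace X]
    (hwf : (Set.range fun p : X × X => dist p.1 p.2).WellFoundedOn (· < ·))
    (f : X → X) :
    (Function.Bijective f ∧ ∀ p q : X × X,
        dist p.1 p.2 ≤ dist q.1 q.2 ↔ dist (f p.1) (f p.2) ≤ dist (f q.1) (f q.2)) ↔
      (Function.Bijective f ∧ Isometry f) := by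
  constructor
  · rintro ⟨hb, h⟩
    exact ⟨hb, echeloned_key hwf f hb h⟩
  · rintro ⟨hb, hiso⟩
    refine ⟨hb, fun p q => ?_⟩
    rw [hiso.dist_eq, hiso.dist_eq]

/-- If the set of realized distances of a metric space is well-ordered by `≤`, then the
automorphisms of the induced echeloned space are exactly the bijective isometries;
in particular this holds for every finite metric space. -/
theorem echeloned_aut_eq_iso_of_wellOrdered_distances :
    (∀ (X : Type*) [MetricSpace X],
      (Set.range fun p : X × X => dist p.1 p.2).WellFoundedOn (· < ·) →
      ∀ f : X → X,
        (Function.Bijective f ∧ ∀ p q : X × X,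
            dist p.1 p.2 ≤ dist q.1 q.2 ↔ dist (f p.1) (f p.2) ≤ dist (f q.1) (f q.2)) ↔
          (Function.Bijective f ∧ Isometry f)) ∧
    (∀ (Y : Type*) [MetricSpace Y] [Finite Y], ∀ g : Y → Y,
        (Function.Bijective g ∧ ∀ p q : Y × Y,
            dist p.1 p.2 ≤ dist q.1 q.2 ↔ dist (g p.1) (g p.2) ≤ dist (g q.1) (g q.2)) ↔
          (Function.Bijective g ∧ Isometry g)) := by
  refine ⟨fun X _ hwf f => echeloned_main X hwf f, fun Y _ _ g => ?_⟩
  exact echeloned_main Y ((Set.finite_range _).wellFoundedOn) g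
end

section
/- Let (X, d_X) and (Y, d_Y) be metric spaces with induced echelons ≤_X and ≤_Y, and let f : X → Y be a homomorphism of the induced echeloned spaces. If (X, d_X) has midpoints, then f is constant or injective. -/
/-- If `(X, d_X)` has midpoints, every homomorphism of the induced echeloned spaces
is constant or injective. -/
theorem echeloned_hom_const_or_injective {X Y : Type*} [MetricSpace X] [MetricSpace Y]
    (hmid : ∀ x y : X, ∃ z : X, dist z x = dist x y / 2 ∧ dist z y = dist x y / 2)
    (f : X → Y)
    (hf : ∀ p q : X × X, dist p.1 p.2 ≤ dist q.1 q.2 →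
      dist (f p.1) (f p.2) ≤ dist (f q.1) (f q.2)) :
    (∃ c : Y, ∀ x : X, f x = c) ∨ Function.Injective f := by
  by_cases hinj : Function.Injective f
  · exact Or.inr hinj
  · left
    simp only [Function.Injective] at hinj
    push_neg at hinj
    obtain ⟨a, b, hfab, hab⟩ := hinj
    have hr : 0 < dist a b := dist_pos.mpr hab
    have key : ∀ n : ℕ, ∀ x y : X, dist x y ≤ 2 ^ n * dist a b → f x = f y := by
      intro n
      induction n with
      | zero =>
        intro x y h
        have h' := hf (x, y) (a, b) (by simpa using h)
        simp only [hfab, dist_self] at h'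
        exact dist_le_zero.mp h'
      | succ n ih =>
        intro x y h
        obtain ⟨z, hzx, hzy⟩ := hmid x y
        have h2 : dist x y / 2 ≤ 2 ^ n * dist a b := by
          rw [pow_succ] at h; linarith
        have h1 : f z = f x := ih z x (by rw [hzx]; exact h2)
        have h3 : f z = f y := ih z y (by rw [hzy]; exact h2)
        rw [← h1, h3]
    refine ⟨f a, fun x => ?_⟩
    obtain ⟨n, hn⟩ := pow_unbounded_of_one_lt (dist x a / dist a b) (by norm_num : (1:ℝ) < 2)
    exact key n x a (le_of_lt ((div_lt_iff₀ hr).mp hn))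
end

section
/- Let (X, d_X) and (Y, d_Y) be metric spaces with midpoints inducing echelons ≤_X and ≤_Y, and let f : X → Y be a surjective homomorphism of the induced echeloned spaces. Then for all x, y ∈ X, f maps every midpoint of x and y to a midpoint of f(x) and f(y). -/
/-- A surjective homomorphism of echeloned spaces induced by metric spaces with
midpoints maps midpoints to midpoints. -/
theorem echeloned_hom_maps_midpoints {X Y : Type*} [MetricSpace X] [MetricSpace Y]
    (hmidX : ∀ x y : X, ∃ z : X, dist z x = dist x y / 2 ∧ dist z y = dist x y / 2)
    (hmidY : ∀ x y : Y, ∃ z : Y, dist z x = dist x y / 2 ∧ dist z y = dist x y / 2)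
    (f : X → Y) (hsurj : Function.Surjective f)
    (hf : ∀ p q : X × X, dist p.1 p.2 ≤ dist q.1 q.2 →
      dist (f p.1) (f p.2) ≤ dist (f q.1) (f q.2)) :
    ∀ x y m : X, dist m x = dist x y / 2 → dist m y = dist x y / 2 →
      dist (f m) (f x) = dist (f x) (f y) / 2 ∧
        dist (f m) (f y) = dist (f x) (f y) / 2 := by
  intro x y m hmx hmy
  have haa : dist (f m) (f x) = dist (f m) (f y) := by
    have h1 := hf (m, x) (m, y) (by simp [hmx, hmy])
    have h2 := hf (m, y) (m, x) (by simp [hmx, hmy])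
    exact le_antisymm h1 h2
  have htri : dist (f x) (f y) ≤ dist (f m) (f x) + dist (f m) (f y) := by
    rw [dist_comm (f m) (f x)]; exact dist_triangle _ _ _
  have hge : dist (f m) (f x) + dist (f m) (f y) ≤ dist (f x) (f y) := by
    by_contra h
    push_neg at h
    obtain ⟨n, hn1, hn2⟩ := hmidY (f x) (f y)
    obtain ⟨w, rfl⟩ := hsurj n
    have h1 : dist (f w) (f x) < dist (f m) (f x) := by rw [hn1]; linarith
    have h2 : dist (f w) (f y) < dist (f m) (f y) := by rw [hn2]; linarith
    have hw1 : dist w x < dist m x := by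
      by_contra hc; push_neg at hc
      exact absurd (hf (m, x) (w, x) hc) (not_le.mpr h1)
    have hw2 : dist w y < dist m y := by
      by_contra hc; push_neg at hc
      exact absurd (hf (m, y) (w, y) hc) (not_le.mpr h2)
    have htx := dist_triangle x w y
    rw [dist_comm x w] at htx
    linarith
  constructor <;> linarith
end

section
/- Let (X, d) be a metric space with midpoints, and let f be an automorphism of the induced echeloned space (X, ≤_X). Then f is a dilation: there exists t > 0 such that d(f(x), f(y)) = t · d(x, y) for all x, y ∈ X. -/
section EchAux

variable {X : Type*} [MetricSpace X]

/-- A map preserving and reflecting the echelon order on pairs. -/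
def EchMap (g : X → X) : Prop :=
  ∀ p q : X × X, dist p.1 p.2 ≤ dist q.1 q.2 ↔ dist (g p.1) (g p.2) ≤ dist (g q.1) (g q.2)

lemma EchMap.le {g : X → X} (hG : EchMap g) {x y u v : X} (h : dist x y ≤ dist u v) :
    dist (g x) (g y) ≤ dist (g u) (g v) := (hG (x, y) (u, v)).1 h

lemma EchMap.eq {g : X → X} (hG : EchMap g) {x y u v : X} (h : dist x y = dist u v) :
    dist (g x) (g y) = dist (g u) (g v) :=
  le_antisymm (hG.le h.le) (hG.le h.ge)

/-- Dyadic points on a "segment". -/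
lemma dyadic_point
    (hmid : ∀ x y : X, ∃ z : X, dist z x = dist x y / 2 ∧ dist z y = dist x y / 2) :
    ∀ n k : ℕ, k ≤ 2 ^ n → ∀ x y : X,
      ∃ p : X, dist x p = ((k : ℝ) / 2 ^ n) * dist x y ∧
        dist p y = (1 - (k : ℝ) / 2 ^ n) * dist x y := by
  intro n
  induction n with
  | zero =>
      intro k hk x y
      have hk' : k ≤ 1 := by simpa using hk
      interval_cases k
      · exact ⟨x, by simp⟩
      · exact ⟨y, by simp⟩
  | succ n ih =>
      intro k hk x y
      by_cases h : k ≤ 2 ^ n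
      · obtain ⟨p, hp1, hp2⟩ := ih k h x y
        obtain ⟨z, hz1, hz2⟩ := hmid x p
        have hxz : dist x z = ((k : ℝ) / 2 ^ (n + 1)) * dist x y := by
          rw [dist_comm x z, hz1, hp1]; push_cast; ring
        refine ⟨z, hxz, ?_⟩
        have hub : dist z y ≤ (1 - (k : ℝ) / 2 ^ (n + 1)) * dist x y := by
          calc dist z y ≤ dist z p + dist p y := dist_triangle z p y
          _ = (1 - (k : ℝ) / 2 ^ (n + 1)) * dist x y := by
              rw [hz2, hp1, hp2]; push_cast; ring
        have htr := dist_triangle x z y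
        linarith [htr, hxz]
      · push_neg at h
        have hk2 : k ≤ 2 ^ (n + 1) := hk
        set j := k - 2 ^ n with hjdef
        have hjle : j ≤ 2 ^ n := by omega
        have hjc : (j : ℝ) = (k : ℝ) - 2 ^ n := by
          have h2k : 2 ^ n ≤ k := h.le
          push_cast [hjdef, Nat.cast_sub h2k]; ring
        obtain ⟨p, hp1, hp2⟩ := ih j hjle x y
        obtain ⟨z, hz1, hz2⟩ := hmid p y
        have hzy : dist z y = (1 - (k : ℝ) / 2 ^ (n + 1)) * dist x y := by
          rw [hz2, hp2, hjc]; push_cast; field_simp; ring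
        have hub : dist x z ≤ ((k : ℝ) / 2 ^ (n + 1)) * dist x y := by
          calc dist x z ≤ dist x p + dist p z := dist_triangle x p z
          _ = ((k : ℝ) / 2 ^ (n + 1)) * dist x y := by
              rw [dist_comm p z, hz1, hp1, hp2, hjc]; push_cast; field_simp; ring
        have htr := dist_triangle x z y
        exact ⟨z, by linarith, hzy⟩


/-- The induced map on distances halves midpoint distances. -/
lemma ech_half
    (hmid : ∀ x y : X, ∃ z : X, dist z x = dist x y / 2 ∧ dist z y = dist x y / 2)
    {g g' : X → X} (hG : EchMap g) (hG' : EchMap g')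
    (h1 : ∀ a, g' (g a) = a) (h2 : ∀ a, g (g' a) = a)
    (x y z : X) (hzx : dist z x = dist x y / 2) (hzy : dist z y = dist x y / 2) :
    dist (g z) (g x) = dist (g x) (g y) / 2 := by
  have hsym : dist (g z) (g x) = dist (g z) (g y) := hG.eq (hzx.trans hzy.symm)
  have up : dist (g x) (g y) ≤ 2 * dist (g z) (g x) := by
    have htr := dist_triangle (g x) (g z) (g y)
    rw [dist_comm (g x) (g z)] at htr
    linarith [hsym]
  obtain ⟨m, hm1, hm2⟩ := hmid (g x) (g y)
  have hmm : dist (g' m) x = dist (g' m) y := by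
    have hmeq : dist m (g x) = dist m (g y) := hm1.trans hm2.symm
    have := hG'.eq hmeq
    rwa [h1, h1] at this
  have hx : dist x y ≤ 2 * dist (g' m) x := by
    have htr := dist_triangle x (g' m) y
    rw [dist_comm x (g' m)] at htr
    linarith [hmm]
  have hle : dist z x ≤ dist (g' m) x := by linarith
  have hB := hG.le hle
  rw [h2] at hB
  rw [hm1] at hB
  linarith


/-- Main lemma: the induced map on distances scales dyadic fractions. -/
lemma ech_main
    (hmid : ∀ x y : X, ∃ z : X, dist z x = dist x y / 2 ∧ dist z y = dist x y / 2) :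
    ∀ n : ℕ, ∀ g g' : X → X, EchMap g → EchMap g' →
      (∀ a, g' (g a) = a) → (∀ a, g (g' a) = a) →
      ∀ k : ℕ, k ≤ 2 ^ n → ∀ x y p : X, dist x p = ((k : ℝ) / 2 ^ n) * dist x y →
        dist (g x) (g p) = ((k : ℝ) / 2 ^ n) * dist (g x) (g y) := by
  intro n
  induction n with
  | zero =>
      intro g g' hG hG' h1 h2 k hk x y p hp
      have hk' : k ≤ 1 := by simpa using hk
      interval_cases k
      · have hxp : dist x p = 0 := by simpa using hp
        have : x = p := dist_eq_zero.mp hxp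
        subst this
        simp
      · have hxp : dist x p = dist x y := by simpa using hp
        have := hG.eq hxp
        simpa using this
  | succ n ih =>
      intro g g' hG hG' h1 h2 k hk x y p hp
      have small : ∀ g g' : X → X, EchMap g → EchMap g' →
          (∀ a, g' (g a) = a) → (∀ a, g (g' a) = a) →
          ∀ k : ℕ, k ≤ 2 ^ n → ∀ x y p : X,
            dist x p = ((k : ℝ) / 2 ^ (n + 1)) * dist x y →
            dist (g x) (g p) = ((k : ℝ) / 2 ^ (n + 1)) * dist (g x) (g y) := by
        intro g g' hG hG' h1 h2 k hk x y p hp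
        obtain ⟨z, hz1, hz2⟩ := hmid x y
        have hxz : dist x z = dist x y / 2 := by rw [dist_comm]; exact hz1
        have hp' : dist x p = ((k : ℝ) / 2 ^ n) * dist x z := by
          rw [hxz, hp]; ring
        have hmain := ih g g' hG hG' h1 h2 k hk x z p hp'
        have hgz : dist (g x) (g z) = dist (g x) (g y) / 2 := by
          rw [dist_comm (g x) (g z)]
          exact ech_half hmid hG hG' h1 h2 x y z hz1 hz2
        rw [hmain, hgz]; ring
      have Agen : ∀ g g' : X → X, EchMap g → EchMap g' →
          (∀ a, g' (g a) = a) → (∀ a, g (g' a) = a) →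
          ∀ k : ℕ, 2 ^ n ≤ k → k ≤ 2 ^ (n + 1) → ∀ x y p : X,
            dist x p = ((k : ℝ) / 2 ^ (n + 1)) * dist x y →
            ((k : ℝ) / 2 ^ (n + 1)) * dist (g x) (g y) ≤ dist (g x) (g p) := by
        intro g g' hG hG' h1 h2 k hk1 hk2 x y p hp
        set j := 2 ^ (n + 1) - k with hjdef
        have hjle : j ≤ 2 ^ n := by omega
        have hjc : (j : ℝ) = 2 ^ (n + 1) - (k : ℝ) := by
          push_cast [hjdef, Nat.cast_sub hk2]; ring
        obtain ⟨q, hq1, hq2⟩ := dyadic_point hmid (n + 1) k hk2 x y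
        have hyq : dist y q = ((j : ℝ) / 2 ^ (n + 1)) * dist y x := by
          have h2ne : ((2:ℝ) ^ (n + 1)) ≠ 0 := by positivity
          rw [dist_comm y q, hq2, dist_comm y x, hjc, sub_div, div_self h2ne]
        have hgq := small g g' hG hG' h1 h2 j hjle y x q hyq
        have heq : dist (g x) (g q) = dist (g x) (g p) := hG.eq (hq1.trans hp.symm)
        have htri := dist_triangle (g x) (g q) (g y)
        rw [dist_comm (g q) (g y)] at htri
        rw [dist_comm (g y) (g x)] at hgq
        have key : ((j : ℝ) / 2 ^ (n + 1)) * dist (g x) (g y)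
            = dist (g x) (g y) - ((k : ℝ) / 2 ^ (n + 1)) * dist (g x) (g y) := by
          have h2ne : ((2:ℝ) ^ (n + 1)) ≠ 0 := by positivity
          rw [hjc, sub_div, div_self h2ne]; ring
        linarith [htri, hgq, heq, key]
      by_cases hsm : k ≤ 2 ^ n
      · exact small g g' hG hG' h1 h2 k hsm x y p hp
      · push_neg at hsm
        have hA := Agen g g' hG hG' h1 h2 k hsm.le hk x y p hp
        obtain ⟨m, hm1, hm2⟩ := dyadic_point hmid (n + 1) k hk (g x) (g y)
        have hA' := Agen g' g hG' hG h2 h1 k hsm.le hk (g x) (g y) m hm1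
        rw [h1, h1] at hA'
        have hle : dist x p ≤ dist x (g' m) := by rw [hp]; exact hA'
        have hB := hG.le hle
        rw [h2, hm1] at hB
        exact le_antisymm hB hA

end EchAux

/-- Every automorphism of the echeloned space induced by a metric space with
midpoints is a dilation. -/
theorem echeloned_automorphism_is_dilation {X : Type*} [MetricSpace X]
    (hmid : ∀ x y : X, ∃ z : X, dist z x = dist x y / 2 ∧ dist z y = dist x y / 2)
    (f : X → X) (hbij : Function.Bijective f)
    (hf : ∀ p q : X × X, dist p.1 p.2 ≤ dist q.1 q.2 ↔
      dist (f p.1) (f p.2) ≤ dist (f q.1) (f q.2)) :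
    ∃ t : ℝ, 0 < t ∧ ∀ x y : X, dist (f x) (f y) = t * dist x y := by
  have hG : EchMap f := hf
  by_cases hdeg : ∀ x y : X, dist x y = 0
  · refine ⟨1, one_pos, fun x y => ?_⟩
    have hxy' : x = y := dist_eq_zero.mp (hdeg x y)
    subst hxy'
    simp
  · push_neg at hdeg
    obtain ⟨x0, y0, hr0⟩ := hdeg
    set e := Equiv.ofBijective f hbij with he
    set finv : X → X := fun a => e.symm a with hfinvdef
    have h2 : ∀ a, f (finv a) = a := fun a => e.apply_symm_apply a
    have h1 : ∀ a, finv (f a) = a := fun a => e.symm_apply_apply a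
    have hG' : EchMap finv := by
      intro p q
      have hh := hf (finv p.1, finv p.2) (finv q.1, finv q.2)
      simp only [h2] at hh
      exact hh.symm
    have key : ∀ u v x y : X, dist u v ≠ 0 → dist x y ≤ dist u v →
        dist (f x) (f y) * dist u v = dist (f u) (f v) * dist x y := by
      intro u v x y huv hle
      have hR : 0 < dist u v := lt_of_le_of_ne dist_nonneg (Ne.symm huv)
      set c : ℝ := dist x y / dist u v with hc
      have hc0 : 0 ≤ c := div_nonneg dist_nonneg hR.le
      have hc1 : c ≤ 1 := (div_le_one hR).mpr hle
      have hS : (0:ℝ) ≤ dist (f u) (f v) := dist_nonneg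
      have hcR : c * dist u v = dist x y := by rw [hc]; field_simp
      have hi : ∀ n : ℕ, (c - (1/2:ℝ) ^ n) * dist (f u) (f v) ≤ dist (f x) (f y) := by
        intro n
        have h2p : (0:ℝ) < 2 ^ n := by positivity
        set k : ℕ := ⌊c * 2 ^ n⌋₊ with hk
        have hkle : k ≤ 2 ^ n := by
          have hcast : ((2 ^ n : ℕ) : ℝ) = (2:ℝ) ^ n := by push_cast; ring
          have : c * 2 ^ n ≤ ((2 ^ n : ℕ) : ℝ) := by rw [hcast]; nlinarith
          calc k ≤ ⌊((2 ^ n : ℕ) : ℝ)⌋₊ := Nat.floor_le_floor this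
          _ = 2 ^ n := Nat.floor_natCast _
        have hkc1 : (k : ℝ) ≤ c * 2 ^ n := Nat.floor_le (by positivity)
        have hkc2 : c * 2 ^ n < k + 1 := Nat.lt_floor_add_one _
        obtain ⟨p, hp1, hp2⟩ := dyadic_point hmid n k hkle u v
        have hm := ech_main hmid n f finv hG hG' h1 h2 k hkle u v p hp1
        have hup : dist u p ≤ dist x y := by
          rw [hp1, ← hcR]
          apply mul_le_mul_of_nonneg_right _ hR.le
          rw [div_le_iff₀ h2p]; linarith
        have hmono := hG.le hup
        rw [hm] at hmono
        have hck : c - (1/2:ℝ) ^ n ≤ (k : ℝ) / 2 ^ n := by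
          rw [le_div_iff₀ h2p]
          have hpw : (1/2:ℝ) ^ n * 2 ^ n = 1 := by rw [← mul_pow]; norm_num
          nlinarith
        nlinarith [mul_le_mul_of_nonneg_right hck hS]
      have hii : ∀ n : ℕ, dist (f x) (f y) ≤ (c + (1/2:ℝ) ^ n) * dist (f u) (f v) := by
        intro n
        have h2p : (0:ℝ) < 2 ^ n := by positivity
        set k : ℕ := ⌈c * 2 ^ n⌉₊ with hk
        have hkle : k ≤ 2 ^ n := by
          apply Nat.ceil_le.mpr
          push_cast
          nlinarith
        have hkc1 : c * 2 ^ n ≤ (k : ℝ) := Nat.le_ceil _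
        have hkc2 : (k : ℝ) < c * 2 ^ n + 1 := by
          have := Nat.ceil_lt_add_one (a := c * 2 ^ n) (by positivity)
          exact this
        obtain ⟨p, hp1, hp2⟩ := dyadic_point hmid n k hkle u v
        have hm := ech_main hmid n f finv hG hG' h1 h2 k hkle u v p hp1
        have hup : dist x y ≤ dist u p := by
          rw [hp1, ← hcR]
          apply mul_le_mul_of_nonneg_right _ hR.le
          rw [le_div_iff₀ h2p]; linarith
        have hmono := hG.le hup
        rw [hm] at hmono
        have hck : (k : ℝ) / 2 ^ n ≤ c + (1/2:ℝ) ^ n := by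
          rw [div_le_iff₀ h2p]
          have hpw : (1/2:ℝ) ^ n * 2 ^ n = 1 := by rw [← mul_pow]; norm_num
          nlinarith
        nlinarith [mul_le_mul_of_nonneg_right hck hS]
      have hpow : Filter.Tendsto (fun n : ℕ => ((1:ℝ)/2) ^ n) Filter.atTop (nhds 0) :=
        tendsto_pow_atTop_nhds_zero_of_lt_one (by norm_num) (by norm_num)
      have hlim1 : Filter.Tendsto (fun n : ℕ => (c - (1/2:ℝ) ^ n) * dist (f u) (f v))
          Filter.atTop (nhds (c * dist (f u) (f v))) := by
        have := (hpow.const_sub c).mul_const (dist (f u) (f v))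
        simpa using this
      have hlim2 : Filter.Tendsto (fun n : ℕ => (c + (1/2:ℝ) ^ n) * dist (f u) (f v))
          Filter.atTop (nhds (c * dist (f u) (f v))) := by
        have := (hpow.const_add c).mul_const (dist (f u) (f v))
        simpa using this
      have hle1 : c * dist (f u) (f v) ≤ dist (f x) (f y) :=
        le_of_tendsto hlim1 (Filter.Eventually.of_forall hi)
      have hle2 : dist (f x) (f y) ≤ c * dist (f u) (f v) :=
        ge_of_tendsto hlim2 (Filter.Eventually.of_forall hii)
      have heq : dist (f x) (f y) = c * dist (f u) (f v) := le_antisymm hle2 hle1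
      rw [heq, hc]
      field_simp
    have hs0 : dist (f x0) (f y0) ≠ 0 := by
      intro h
      apply hr0
      rw [dist_eq_zero] at h ⊢
      exact hbij.injective h
    refine ⟨dist (f x0) (f y0) / dist x0 y0,
      div_pos (lt_of_le_of_ne dist_nonneg (Ne.symm hs0))
        (lt_of_le_of_ne dist_nonneg (Ne.symm hr0)), fun x y => ?_⟩
    rw [div_mul_eq_mul_div, eq_div_iff hr0]
    rcases le_total (dist x y) (dist x0 y0) with h | h
    · linarith [key x0 y0 x y hr0 h]
    · by_cases hxy : dist x y = 0
      · have hxy' : x = y := dist_eq_zero.mp hxy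
        subst hxy'
        simp
      · linarith [key x y x0 y0 hxy h]
end

section
/- The class of finite echeloned spaces has the strong amalgamation property: given finite echeloned spaces A, B₁, B₂ and embeddings f₁ : A ↪ B₁, f₂ : A ↪ B₂, there exist a finite echeloned space C and embeddings g₁ : B₁ ↪ C, g₂ : B₂ ↪ C with g₁ ∘ f₁ = g₂ ∘ f₂ and g₁[B₁] ∩ g₂[B₂] = g₁[f₁[A]]. -/
/-- An embedding of echeloned spaces: an injective map preserving and reflecting `≤`. -/
def IsEchEmbedding {X Y : Type*} (leX : X × X → X × X → Prop)
    (leY : Y × Y → Y × Y → Prop) (f : X → Y) : Prop :=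
  Function.Injective f ∧
    ∀ p q : X × X, leX p q ↔ leY (f p.1, f p.2) (f q.1, f q.2)

open Function Set

section RelRank

variable {S Y : Type*} {r : Y → Y → Prop} {e : S → Y} {p q : Y}

noncomputable def lowerCount (r : Y → Y → Prop) (e : S → Y) (p : Y) : ℕ :=
  {s | r (e s) p}.ncard

def levelBelow (r : Y → Y → Prop) (e : S → Y) (p : Y) : Set Y :=
  {q | r q p ∧ ¬ r p q ∧ lowerCount r e q = lowerCount r e p}

noncomputable def relRank (r : Y → Y → Prop) (e : S → Y) (p : Y) : ℕ ×ₗ ℕ :=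
  toLex (lowerCount r e p, (levelBelow r e p).ncard)

lemma lowerCount_mono [Finite S] (htrans : ∀ a b c, r a b → r b c → r a c) (h : r p q) :
    lowerCount r e p ≤ lowerCount r e q :=
  ncard_le_ncard fun _ hs => htrans _ _ _ hs h

lemma levelBelow_subset (htrans : ∀ a b c, r a b → r b c → r a c) (h : r p q)
    (hcount : lowerCount r e p = lowerCount r e q) : levelBelow r e p ⊆ levelBelow r e q :=
  fun _ ⟨hq'p, hpq', hc⟩ =>
    ⟨htrans _ _ _ hq'p h, fun hqq' => hpq' (htrans _ _ _ h hqq'), hc.trans hcount⟩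

lemma relRank_le_of_le [Finite S] [Finite Y] (htrans : ∀ a b c, r a b → r b c → r a c)
    (h : r p q) :
    relRank r e p ≤ relRank r e q :=
  Prod.Lex.toLex_le_toLex'.2
    ⟨lowerCount_mono htrans h, fun hcount => ncard_le_ncard (levelBelow_subset htrans h hcount)⟩

lemma relRank_lt_of_lt [Finite S] [Finite Y] (htrans : ∀ a b c, r a b → r b c → r a c)
    (h : r p q) (h' : ¬ r q p) :
    relRank r e p < relRank r e q := by
  refine Prod.Lex.toLex_lt_toLex'.2 ⟨lowerCount_mono htrans h, fun hcount => ncard_lt_ncard ?_⟩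
  exact (ssubset_iff_of_subset (levelBelow_subset htrans h hcount)).2
    ⟨p, ⟨h, h', hcount⟩, fun hp => hp.2.1 hp.1⟩

lemma relRank_le_iff [Finite S] [Finite Y] (htrans : ∀ a b c, r a b → r b c → r a c)
    (htot : ∀ a b, r a b ∨ r b a) :
    r p q ↔ relRank r e p ≤ relRank r e q :=
  ⟨relRank_le_of_le htrans, fun h => by_contra fun hpq =>
    (relRank_lt_of_lt htrans ((htot p q).resolve_left hpq) hpq).not_ge h⟩

lemma relRank_of_forall_le (hp : ∀ q, r p q) : relRank r e p = toLex (lowerCount r e p, 0) := by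
  simp [relRank, levelBelow, hp]

lemma relRank_apply [Finite S] (htrans : ∀ a b c, r a b → r b c → r a c)
    (htot : ∀ a b, r a b ∨ r b a) {r₀ : S → S → Prop}
    (he : ∀ s t, r₀ s t ↔ r (e s) (e t)) (s : S) :
    relRank r e (e s) = toLex ({t | r₀ t s}.ncard, 0) := by
  have hlevel : levelBelow r e (e s) = ∅ := by
    refine eq_empty_of_forall_notMem fun q ⟨hq, hsq, hcount⟩ => hsq ?_
    have hbelow : {t | r (e t) q} = {t | r (e t) (e s)} :=
      eq_of_subset_of_ncard_le (fun _ ht => htrans _ _ _ ht hq) hcount.ge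
    have hs : s ∈ {t | r (e t) (e s)} := (htot (e s) (e s)).elim id id
    rwa [← hbelow] at hs
  simp only [relRank, hlevel, ncard_empty, lowerCount, he]

end RelRank

section EchelonRank

variable {X Λ : Type*} [LinearOrder Λ]

structure IsEchelonRank (d : X × X → Λ) (m : Λ) : Prop where
  diag : ∀ x, d (x, x) = m
  lt_of_ne : ∀ p : X × X, p.1 ≠ p.2 → m < d p
  swap : ∀ p : X × X, d p.swap = d p

lemma IsEchelonRank.isEcheloned {d : X × X → Λ} {m : Λ} (hd : IsEchelonRank d m) :
    IsEcheloned fun p q => d p ≤ d q := by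
  refine ⟨fun _ => le_rfl, fun _ _ _ => le_trans, fun _ _ => le_total _ _, ?_, ?_, ?_⟩
  · intro x y z
    rw [hd.diag]
    rcases eq_or_ne y z with rfl | hyz
    · rw [hd.diag]
    · exact (hd.lt_of_ne (y, z) hyz).le
  · intro x y z h
    by_contra hyz
    exact (hd.lt_of_ne (y, z) hyz).not_ge (hd.diag x ▸ h)
  · intro x y
    exact (hd.swap (x, y)).ge

lemma isEchEmbedding_of_rank {Y : Type*} {leX : X × X → X × X → Prop} {dX : X × X → Λ}
    {d : Y × Y → Λ} {g : X → Y} (hg : Injective g) (hd : ∀ x y, d (g x, g y) = dX (x, y))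
    (hle : ∀ p q, leX p q ↔ dX p ≤ dX q) :
    IsEchEmbedding leX (fun p q => d p ≤ d q) g :=
  ⟨hg, fun p q => by simp only [hd]; exact hle p q⟩

lemma isEchelonRank_relRank {A : Type*} [Finite A] [Finite X] {le : X × X → X × X → Prop}
    (hX : IsEcheloned le) {f : A → X} (hf : Injective f) :
    IsEchelonRank (relRank le (Prod.map f f)) (toLex ({s : A × A | s.1 = s.2}.ncard, 0)) := by
  obtain ⟨-, htrans, htot, hmin, hdiag, hswap⟩ := hX
  have diag (x : X) :
      relRank le (Prod.map f f) (x, x) = toLex ({s : A × A | s.1 = s.2}.ncard, 0) := by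
    rw [relRank_of_forall_le (fun q => hmin x q.1 q.2), lowerCount]
    congr 3
    ext ⟨a, b⟩
    exact ⟨fun h => hf (hdiag x _ _ h), fun (h : a = b) => h ▸ hmin (f a) x x⟩
  refine ⟨diag, fun p hp => ?_, fun p => ?_⟩
  · rw [← diag p.1]
    exact relRank_lt_of_lt htrans (hmin _ _ _) fun h => hp (hdiag _ _ _ h)
  · exact le_antisymm (relRank_le_of_le htrans (hswap _ _)) (relRank_le_of_le htrans (hswap _ _))

end EchelonRank

section Glue

variable {B₁ B₂ C Λ : Type*} {g₁ : B₁ → C} {g₂ : B₂ → C}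
  {d₁ : B₁ × B₁ → Λ} {d₂ : B₂ × B₂ → Λ} {m v : Λ}

noncomputable def glueRank (g₁ : B₁ → C) (g₂ : B₂ → C) (d₁ : B₁ × B₁ → Λ) (d₂ : B₂ × B₂ → Λ)
    (v : Λ) : C × C → Λ :=
  extend (Prod.map g₁ g₁) d₁ (extend (Prod.map g₂ g₂) d₂ fun _ => v)

lemma glueRank_apply_left (hg₁ : Injective g₁) (x y : B₁) :
    glueRank g₁ g₂ d₁ d₂ v (g₁ x, g₁ y) = d₁ (x, y) :=
  (hg₁.prodMap hg₁).extend_apply _ _ (x, y)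

lemma glueRank_apply_right (hg₁ : Injective g₁) (hg₂ : Injective g₂)
    (hcompat : ∀ x y x' y', g₁ x = g₂ x' → g₁ y = g₂ y' → d₁ (x, y) = d₂ (x', y'))
    (x y : B₂) : glueRank g₁ g₂ d₁ d₂ v (g₂ x, g₂ y) = d₂ (x, y) := by
  by_cases h : ∃ p, Prod.map g₁ g₁ p = (g₂ x, g₂ y)
  · obtain ⟨⟨x', y'⟩, hp⟩ := h
    obtain ⟨hx, hy⟩ := Prod.mk.inj hp
    rw [← hx, ← hy, glueRank_apply_left hg₁]
    exact hcompat x' y' x y hx hy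
  · rw [glueRank, extend_apply' _ _ _ h]
    exact (hg₂.prodMap hg₂).extend_apply _ _ (x, y)

lemma glueRank_of_forall_ne {p : C × C} (h₁ : ∀ x y, (g₁ x, g₁ y) ≠ p)
    (h₂ : ∀ x y, (g₂ x, g₂ y) ≠ p) : glueRank g₁ g₂ d₁ d₂ v p = v := by
  rw [glueRank, extend_apply', extend_apply']
  · rintro ⟨⟨x, y⟩, h⟩
    exact h₂ x y h
  · rintro ⟨⟨x, y⟩, h⟩
    exact h₁ x y h

lemma glueRank_cases (hg₁ : Injective g₁) (hg₂ : Injective g₂)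
    (hcompat : ∀ x y x' y', g₁ x = g₂ x' → g₁ y = g₂ y' → d₁ (x, y) = d₂ (x', y'))
    (p : C × C) :
    (∃ x y, p = (g₁ x, g₁ y) ∧ glueRank g₁ g₂ d₁ d₂ v p = d₁ (x, y)) ∨
    (∃ x y, p = (g₂ x, g₂ y) ∧ glueRank g₁ g₂ d₁ d₂ v p = d₂ (x, y)) ∨
    ((∀ x y, (g₁ x, g₁ y) ≠ p) ∧ (∀ x y, (g₂ x, g₂ y) ≠ p) ∧ glueRank g₁ g₂ d₁ d₂ v p = v) := by
  by_cases h₁ : ∃ x y, (g₁ x, g₁ y) = p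
  · obtain ⟨x, y, rfl⟩ := h₁
    exact .inl ⟨x, y, rfl, glueRank_apply_left hg₁ x y⟩
  by_cases h₂ : ∃ x y, (g₂ x, g₂ y) = p
  · obtain ⟨x, y, rfl⟩ := h₂
    exact .inr (.inl ⟨x, y, rfl, glueRank_apply_right hg₁ hg₂ hcompat x y⟩)
  push Not at h₁ h₂
  exact .inr (.inr ⟨h₁, h₂, glueRank_of_forall_ne h₁ h₂⟩)

lemma IsEchelonRank.glue [LinearOrder Λ] (hd₁ : IsEchelonRank d₁ m) (hd₂ : IsEchelonRank d₂ m)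
    (hv : m < v) (hg₁ : Injective g₁) (hg₂ : Injective g₂)
    (hcompat : ∀ x y x' y', g₁ x = g₂ x' → g₁ y = g₂ y' → d₁ (x, y) = d₂ (x', y'))
    (hcover : ∀ z, z ∈ range g₁ ∨ z ∈ range g₂) :
    IsEchelonRank (glueRank g₁ g₂ d₁ d₂ v) m where
  diag z := by
    rcases hcover z with ⟨x, rfl⟩ | ⟨x, rfl⟩
    · rw [glueRank_apply_left hg₁, hd₁.diag]
    · rw [glueRank_apply_right hg₁ hg₂ hcompat, hd₂.diag]
  lt_of_ne p hp := by
    rcases glueRank_cases hg₁ hg₂ hcompat p with ⟨x, y, rfl, h⟩ | ⟨x, y, rfl, h⟩ | ⟨-, -, h⟩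
    · exact h ▸ hd₁.lt_of_ne (x, y) (ne_of_apply_ne g₁ hp)
    · exact h ▸ hd₂.lt_of_ne (x, y) (ne_of_apply_ne g₂ hp)
    · exact h.symm ▸ hv
  swap p := by
    rcases glueRank_cases hg₁ hg₂ hcompat p with ⟨x, y, rfl, h⟩ | ⟨x, y, rfl, h⟩ | ⟨h₁, h₂, h⟩
    · rw [Prod.swap_prod_mk, glueRank_apply_left hg₁, h]
      exact hd₁.swap (x, y)
    · rw [Prod.swap_prod_mk, glueRank_apply_right hg₁ hg₂ hcompat, h]
      exact hd₂.swap (x, y)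
    · rw [h, glueRank_of_forall_ne (fun x y hxy => h₁ y x (by rw [← p.swap_swap, ← hxy]; rfl))
        (fun x y hxy => h₂ y x (by rw [← p.swap_swap, ← hxy]; rfl))]

end Glue

section Amalgam

variable {A B₁ B₂ : Type*} {f₁ : A → B₁} {f₂ : A → B₂}

open Classical in
/-- The set-theoretic amalgam of `f₁` and `f₂` is modelled as `B₁ ⊕ (range f₂)ᶜ`, into which
`B₁` maps by `Sum.inl`. -/
noncomputable def amalgamRight (f₁ : A → B₁) (hf₂ : Injective f₂) : B₂ → B₁ ⊕ ↥(range f₂)ᶜ :=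
  Sum.map (f₁ ∘ (Equiv.ofInjective f₂ hf₂).symm) id ∘ (Equiv.Set.sumCompl (range f₂)).symm

lemma amalgamRight_apply (hf₂ : Injective f₂) (a : A) :
    amalgamRight f₁ hf₂ (f₂ a) = Sum.inl (f₁ a) := by
  classical
  rw [amalgamRight, comp_apply, Equiv.Set.sumCompl_symm_apply_of_mem (mem_range_self a),
    Sum.map_inl, comp_apply, Equiv.ofInjective_symm_apply]

lemma amalgamRight_of_notMem (hf₂ : Injective f₂) {y : B₂} (hy : y ∉ range f₂) :
    amalgamRight f₁ hf₂ y = Sum.inr ⟨y, hy⟩ := by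
  classical
  rw [amalgamRight, comp_apply, Equiv.Set.sumCompl_symm_apply_of_notMem hy, Sum.map_inr, id]

lemma amalgamRight_injective (hf₁ : Injective f₁) (hf₂ : Injective f₂) :
    Injective (amalgamRight f₁ hf₂) :=
  ((hf₁.comp (Equiv.injective _)).sumMap injective_id).comp (Equiv.injective _)

lemma exists_of_inl_eq_amalgamRight (hf₂ : Injective f₂) {x : B₁} {y : B₂}
    (h : Sum.inl x = amalgamRight f₁ hf₂ y) : ∃ a, f₁ a = x ∧ f₂ a = y := by
  by_cases hy : y ∈ range f₂
  · obtain ⟨a, rfl⟩ := hy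
    rw [amalgamRight_apply] at h
    exact ⟨a, (Sum.inl_injective h).symm, rfl⟩
  · rw [amalgamRight_of_notMem hf₂ hy] at h
    exact absurd h Sum.inl_ne_inr

lemma range_inl_union_range_amalgamRight (hf₂ : Injective f₂) (z : B₁ ⊕ ↥(range f₂)ᶜ) :
    z ∈ range Sum.inl ∨ z ∈ range (amalgamRight f₁ hf₂) := by
  rcases z with x | ⟨y, hy⟩
  · exact .inl (mem_range_self x)
  · exact .inr ⟨y, amalgamRight_of_notMem hf₂ hy⟩

lemma range_inl_inter_range_amalgamRight (hf₂ : Injective f₂) :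
    range Sum.inl ∩ range (amalgamRight f₁ hf₂) = Sum.inl '' range f₁ := by
  ext z
  constructor
  · rintro ⟨⟨x, rfl⟩, y, hy⟩
    obtain ⟨a, rfl, -⟩ := exists_of_inl_eq_amalgamRight hf₂ hy.symm
    exact mem_image_of_mem _ (mem_range_self a)
  · rintro ⟨_, ⟨a, rfl⟩, rfl⟩
    exact ⟨mem_range_self _, f₂ a, amalgamRight_apply hf₂ a⟩

end Amalgam

theorem finite_echeloned_strong_amalgamation_general {A B₁ B₂ : Type}
    [Finite A] [Finite B₁] [Finite B₂]
    (leA : A × A → A × A → Prop) (leB₁ : B₁ × B₁ → B₁ × B₁ → Prop)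
    (leB₂ : B₂ × B₂ → B₂ × B₂ → Prop)
    (hB₁ : IsEcheloned leB₁) (hB₂ : IsEcheloned leB₂)
    (f₁ : A → B₁) (f₂ : A → B₂)
    (hf₁ : IsEchEmbedding leA leB₁ f₁) (hf₂ : IsEchEmbedding leA leB₂ f₂) :
    ∃ (C : Type) (leC : C × C → C × C → Prop), Finite C ∧ IsEcheloned leC ∧
      ∃ (g₁ : B₁ → C) (g₂ : B₂ → C),
        IsEchEmbedding leB₁ leC g₁ ∧ IsEchEmbedding leB₂ leC g₂ ∧
        g₁ ∘ f₁ = g₂ ∘ f₂ ∧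
        Set.range g₁ ∩ Set.range g₂ = g₁ '' Set.range f₁ := by
  have ⟨_, htrans₁, htot₁, _⟩ := hB₁
  have ⟨_, htrans₂, htot₂, _⟩ := hB₂
  obtain ⟨v, hv⟩ := exists_gt (toLex ({s : A × A | s.1 = s.2}.ncard, 0) : ℕ ×ₗ ℕ)
  set g₂ := amalgamRight f₁ hf₂.1
  have hcompat (x y : B₁) (x' y' : B₂) (hx : Sum.inl x = g₂ x') (hy : Sum.inl y = g₂ y') :
      relRank leB₁ (Prod.map f₁ f₁) (x, y) = relRank leB₂ (Prod.map f₂ f₂) (x', y') := by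
    obtain ⟨a, rfl, rfl⟩ := exists_of_inl_eq_amalgamRight hf₂.1 hx
    obtain ⟨b, rfl, rfl⟩ := exists_of_inl_eq_amalgamRight hf₂.1 hy
    exact (relRank_apply htrans₁ htot₁ hf₁.2 (a, b)).trans
      (relRank_apply htrans₂ htot₂ hf₂.2 (a, b)).symm
  have hg₂ := amalgamRight_injective hf₁.1 hf₂.1
  have hd := (isEchelonRank_relRank hB₁ hf₁.1).glue (isEchelonRank_relRank hB₂ hf₂.1) hv
    Sum.inl_injective hg₂ hcompat (range_inl_union_range_amalgamRight hf₂.1)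
  refine ⟨_, _, inferInstance, hd.isEcheloned, Sum.inl, g₂,
    isEchEmbedding_of_rank Sum.inl_injective (glueRank_apply_left Sum.inl_injective)
      fun _ _ => relRank_le_iff htrans₁ htot₁,
    isEchEmbedding_of_rank hg₂ (glueRank_apply_right Sum.inl_injective hg₂ hcompat)
      fun _ _ => relRank_le_iff htrans₂ htot₂,
    funext fun a => (amalgamRight_apply hf₂.1 a).symm,
    range_inl_inter_range_amalgamRight hf₂.1⟩

/-- The class of finite echeloned spaces has the strong amalgamation property. -/
theorem finite_echeloned_strong_amalgamation {A B₁ B₂ : Type}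
    [Finite A] [Finite B₁] [Finite B₂] [Nonempty A]
    (leA : A × A → A × A → Prop) (leB₁ : B₁ × B₁ → B₁ × B₁ → Prop)
    (leB₂ : B₂ × B₂ → B₂ × B₂ → Prop)
    (hA : IsEcheloned leA) (hB₁ : IsEcheloned leB₁) (hB₂ : IsEcheloned leB₂)
    (f₁ : A → B₁) (f₂ : A → B₂)
    (hf₁ : IsEchEmbedding leA leB₁ f₁) (hf₂ : IsEchEmbedding leA leB₂ f₂) :
    ∃ (C : Type) (leC : C × C → C × C → Prop), Finite C ∧ IsEcheloned leC ∧
      ∃ (g₁ : B₁ → C) (g₂ : B₂ → C),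
        IsEchEmbedding leB₁ leC g₁ ∧ IsEchEmbedding leB₂ leC g₂ ∧
        g₁ ∘ f₁ = g₂ ∘ f₂ ∧
        Set.range g₁ ∩ Set.range g₂ = g₁ '' Set.range f₁ :=
  finite_echeloned_strong_amalgamation_general leA leB₁ leB₂ hB₁ hB₂ f₁ f₂ hf₁ hf₂
end

section
/- Let C = {c₁, c₂, …} be countably infinite, V a countably infinite set, and p ∈ (0,1). If each 2-element subset of V is independently coloured c_i with probability (1−p)^{i−1} p, then with probability 1 the resulting C-coloured graph has the (∗∞)-property, and hence is isomorphic to the universal homogeneous C-coloured graph. -/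
open MeasureTheory

/-- The `(∗∞)`-property of a `C`-coloured graph `(V, χ)`. -/
def StarInfty {V C : Type*} (χ : V → V → C) : Prop :=
  ∀ (k : ℕ) (c : Fin k → C) (U : Fin k → Finset V),
    (∀ i j : Fin k, i ≠ j → Disjoint (U i) (U j)) →
    ∃ z : V, ∀ i : Fin k, ∀ u ∈ U i, z ≠ u ∧ χ z u = c i

/-!
Fix a finite `T ⊆ V` and target colours `c : T → ℕ`. For distinct vertices `z ∉ T` the events
"`χ(z, u) = c u` for all `u ∈ T`" concern pairwise disjoint sets of edges, so they are independent,
and each has the same positive probability `∏ᵤ (1 - p) ^ c u * p`. By the second Borel–Cantelli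
lemma almost surely one of them occurs, and there are only countably many pairs `(T, c)`.

Two countable symmetric colourings with the `(∗∞)`-property are isomorphic by back and forth: the
`(∗∞)`-property extends a finite colour-preserving partial bijection to any prescribed point on
either side, and a generic ideal of such partial bijections (Rasiowa–Sikorski) is the graph of an
isomorphism.
-/

open Function ProbabilityTheory Filter
open scoped ENNReal

section Extension

variable {V C : Type*} {χ : V → V → C}

theorem StarInfty.exists_of_injective (h : StarInfty χ) {ι : Type*} [Finite ι] {u : ι → V}
    (hu : Injective u) (c : ι → C) : ∃ z, ∀ i, z ≠ u i ∧ χ z (u i) = c i := by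
  obtain ⟨k, ⟨e⟩⟩ := Finite.exists_equiv_fin ι
  obtain ⟨z, hz⟩ := h k (c ∘ e.symm) (fun j => {u (e.symm j)}) fun j j' hjj' => by
    simpa [hu.eq_iff] using hjj'
  exact ⟨z, fun i => by simpa using hz (e i) (u i) (by simp)⟩

theorem starInfty_of_forall_finset
    (h : ∀ (T : Finset V) (c : T → C), ∃ z ∉ T, ∀ u : T, χ z u = c u) : StarInfty χ := by
  classical
  intro k c U hU
  set T := Finset.univ.biUnion U
  have hT : ∀ u : T, ∃ i, (u : V) ∈ U i := fun u =>
    (Finset.mem_biUnion.1 u.2).imp fun _ h => h.2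
  choose idx hidx using hT
  obtain ⟨z, hzT, hz⟩ := h T (c ∘ idx)
  refine ⟨z, fun i u hu => ⟨?_, ?_⟩⟩
  · rintro rfl
    exact hzT (Finset.mem_biUnion.2 ⟨i, Finset.mem_univ i, hu⟩)
  · have huT : u ∈ T := Finset.mem_biUnion.2 ⟨i, Finset.mem_univ i, hu⟩
    have hi : idx ⟨u, huT⟩ = i := by
      by_contra hne
      exact Finset.disjoint_left.1 (hU _ _ hne) (hidx ⟨u, huT⟩) hu
    simpa [hi] using hz ⟨u, huT⟩

end Extension

section BackAndForth

variable {V W C : Type*} (χ : V → V → C) (ψ : W → W → C)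

def IsPartialIso (f : Finset (V × W)) : Prop :=
  ∀ p ∈ f, ∀ q ∈ f, (p.1 = q.1 ↔ p.2 = q.2) ∧ (p.1 ≠ q.1 → ψ p.2 q.2 = χ p.1 q.1)

abbrev PartialIso : Type _ := {f : Finset (V × W) // IsPartialIso χ ψ f}

variable {χ ψ}

namespace IsPartialIso

variable {f : Finset (V × W)}

theorem injective_fst (hf : IsPartialIso χ ψ f) : Injective fun p : f => p.1.1 := fun p q hpq =>
  Subtype.ext (Prod.ext hpq ((hf _ p.2 _ q.2).1.1 hpq))

theorem injective_snd (hf : IsPartialIso χ ψ f) : Injective fun p : f => p.1.2 := fun p q hpq =>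
  Subtype.ext (Prod.ext ((hf _ p.2 _ q.2).1.2 hpq) hpq)

theorem insert [DecidableEq V] [DecidableEq W] (hf : IsPartialIso χ ψ f)
    (hχ : ∀ a a', χ a a' = χ a' a) (hψ : ∀ b b', ψ b b' = ψ b' b) {a : V} {b : W}
    (hab : ∀ p ∈ f, a ≠ p.1 ∧ b ≠ p.2 ∧ ψ b p.2 = χ a p.1) :
    IsPartialIso χ ψ (insert (a, b) f) := by
  intro p hp q hq
  rw [Finset.mem_insert] at hp hq
  rcases hp with rfl | hp <;> rcases hq with rfl | hq
  · exact ⟨iff_of_true rfl rfl, fun h => absurd rfl h⟩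
  · obtain ⟨ha, hb, hc⟩ := hab q hq
    exact ⟨iff_of_false ha hb, fun _ => hc⟩
  · obtain ⟨ha, hb, hc⟩ := hab p hp
    exact ⟨iff_of_false (Ne.symm ha) (Ne.symm hb), fun _ => by rw [hψ, hχ, hc]⟩
  · exact hf p hp q hq

theorem exists_forth (hf : IsPartialIso χ ψ f) (hψ : StarInfty ψ) (a : V) :
    ∃ b : W, ∀ p ∈ f, b ≠ p.2 ∧ ψ b p.2 = χ a p.1 := by
  obtain ⟨b, hb⟩ := hψ.exists_of_injective hf.injective_snd fun p => χ a p.1.1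
  exact ⟨b, fun p hp => hb ⟨p, hp⟩⟩

theorem exists_back (hf : IsPartialIso χ ψ f) (hχ : StarInfty χ) (b : W) :
    ∃ a : V, ∀ p ∈ f, a ≠ p.1 ∧ χ a p.1 = ψ b p.2 := by
  obtain ⟨a, ha⟩ := hχ.exists_of_injective hf.injective_fst fun p => ψ b p.1.2
  exact ⟨a, fun p hp => ha ⟨p, hp⟩⟩

end IsPartialIso

namespace PartialIso

theorem isCofinal_left (hχ : ∀ a a', χ a a' = χ a' a) (hψ : ∀ b b', ψ b b' = ψ b' b)
    (hψ' : StarInfty ψ) (a : V) : IsCofinal {f : PartialIso χ ψ | ∃ b, (a, b) ∈ f.1} := by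
  classical
  intro f
  by_cases ha : ∃ b, (a, b) ∈ f.1
  · exact ⟨f, ha, le_rfl⟩
  obtain ⟨b, hb⟩ := f.2.exists_forth hψ' a
  have hab : ∀ p ∈ f.1, a ≠ p.1 ∧ b ≠ p.2 ∧ ψ b p.2 = χ a p.1 := fun p hp =>
    ⟨fun h => ha ⟨p.2, by rw [h]; exact hp⟩, hb p hp⟩
  exact ⟨⟨_, f.2.insert hχ hψ hab⟩, ⟨b, Finset.mem_insert_self _ _⟩, Finset.subset_insert _ _⟩

theorem isCofinal_right (hχ : ∀ a a', χ a a' = χ a' a) (hψ : ∀ b b', ψ b b' = ψ b' b)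
    (hχ' : StarInfty χ) (b : W) : IsCofinal {f : PartialIso χ ψ | ∃ a, (a, b) ∈ f.1} := by
  classical
  intro f
  by_cases hb : ∃ a, (a, b) ∈ f.1
  · exact ⟨f, hb, le_rfl⟩
  obtain ⟨a, ha⟩ := f.2.exists_back hχ' b
  have hab : ∀ p ∈ f.1, a ≠ p.1 ∧ b ≠ p.2 ∧ ψ b p.2 = χ a p.1 := fun p hp =>
    ⟨(ha p hp).1, fun h => hb ⟨p.1, by rw [h]; exact hp⟩, (ha p hp).2.symm⟩
  exact ⟨⟨_, f.2.insert hχ hψ hab⟩, ⟨a, Finset.mem_insert_self _ _⟩, Finset.subset_insert _ _⟩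

end PartialIso

theorem exists_bijective_colour_eq_of_starInfty [Countable V] [Countable W]
    (hχs : ∀ a a', χ a a' = χ a' a) (hχ : StarInfty χ)
    (hψs : ∀ b b', ψ b b' = ψ b' b) (hψ : StarInfty ψ) :
    ∃ g : V → W, Bijective g ∧ ∀ u v, u ≠ v → ψ (g u) (g v) = χ u v := by
  cases nonempty_encodable V
  cases nonempty_encodable W
  let D : V ⊕ W → Order.Cofinal (PartialIso χ ψ) := Sum.elim
    (fun a => ⟨_, PartialIso.isCofinal_left hχs hψs hψ a⟩)
    (fun b => ⟨_, PartialIso.isCofinal_right hχs hψs hχ b⟩)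
  let I := Order.idealOfCofinals ⟨∅, by simp [IsPartialIso]⟩ D
  have hunion : ∀ p q : V × W, (∃ f ∈ I, p ∈ f.1) → (∃ f ∈ I, q ∈ f.1) →
      (p.1 = q.1 ↔ p.2 = q.2) ∧ (p.1 ≠ q.1 → ψ p.2 q.2 = χ p.1 q.1) := by
    rintro p q ⟨f, hf, hp⟩ ⟨f', hf', hq⟩
    obtain ⟨g, -, hfg, hf'g⟩ := I.directed f hf f' hf'
    exact g.2 p (hfg hp) q (hf'g hq)
  have hleft : ∀ a, ∃ b, ∃ f ∈ I, (a, b) ∈ f.1 := fun a => by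
    obtain ⟨f, ⟨b, hb⟩, hf⟩ := Order.cofinal_meets_idealOfCofinals _ D (.inl a)
    exact ⟨b, f, hf, hb⟩
  have hright : ∀ b, ∃ a, ∃ f ∈ I, (a, b) ∈ f.1 := fun b => by
    obtain ⟨f, ⟨a, ha⟩, hf⟩ := Order.cofinal_meets_idealOfCofinals _ D (.inr b)
    exact ⟨a, f, hf, ha⟩
  choose g hg using hleft
  refine ⟨g, ⟨fun a a' h => (hunion _ _ (hg a) (hg a')).1.2 h, fun b => ?_⟩,
    fun u v huv => (hunion _ _ (hg u) (hg v)).2 huv⟩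
  obtain ⟨a, hab⟩ := hright b
  exact ⟨a, (hunion _ _ (hg a) hab).1.1 rfl⟩

end BackAndForth

section Probability

variable {Ω : Type*} [MeasurableSpace Ω] {μ : Measure Ω}

theorem iIndepSet_iInter_preimage {κ ι β : Type*} [Fintype ι] [MeasurableSpace β]
    {Y : κ → ι → Ω → β} (hY : ∀ n j, Measurable (Y n j))
    (hind : iIndepFun (fun p : κ × ι => Y p.1 p.2) μ) {S : κ → ι → Set β}
    (hS : ∀ n j, MeasurableSet (S n j)) :
    iIndepSet (fun n => ⋂ j, Y n j ⁻¹' S n j) μ := by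
  have hprod (s : Finset (κ × ι)) :
      μ (⋂ p ∈ s, Y p.1 p.2 ⁻¹' S p.1 p.2) = ∏ p ∈ s, μ (Y p.1 p.2 ⁻¹' S p.1 p.2) :=
    hind.meas_biInter fun p _ => ⟨S p.1 p.2, hS p.1 p.2, rfl⟩
  have hblock (n : κ) : μ (⋂ j, Y n j ⁻¹' S n j) = ∏ j, μ (Y n j ⁻¹' S n j) := by
    simpa [Finset.set_biInter_singleton] using hprod ({n} ×ˢ Finset.univ)
  rw [iIndepSet_iff_meas_biInter fun n => .iInter fun j => hY n j (hS n j)]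
  intro s
  calc μ (⋂ n ∈ s, ⋂ j, Y n j ⁻¹' S n j)
      = μ (⋂ p ∈ s ×ˢ Finset.univ, Y p.1 p.2 ⁻¹' S p.1 p.2) := by
        congr 1; ext ω
        simp only [Set.mem_iInter, Set.mem_preimage, Finset.mem_product, Finset.mem_univ,
          and_true, Prod.forall]
        exact ⟨fun h n j hn => h n hn j, fun h n hn j => h n j hn⟩
    _ = ∏ n ∈ s, μ (⋂ j, Y n j ⁻¹' S n j) := by
        rw [hprod, Finset.prod_product]; simp only [hblock]

theorem ae_frequently_mem_of_iIndepSet {A : ℕ → Set Ω} (hA : ∀ n, MeasurableSet (A n))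
    (hind : iIndepSet A μ) (hsum : ∑' n, μ (A n) = ∞) :
    ∀ᵐ ω ∂μ, ∃ᶠ n in atTop, ω ∈ A n := by
  have := hind.isProbabilityMeasure
  have hlimsup : limsup A atTop ∈ ae μ :=
    (mem_ae_iff_prob_eq_one (.measurableSet_limsup hA)).2 (measure_limsup_eq_one hA hind hsum)
  filter_upwards [hlimsup] with ω hω
  exact mem_limsup_iff_frequently_mem.1 hω

variable {V C : Type*} [MeasurableSpace C] [MeasurableSingletonClass C]
  {X : Sym2 V → Ω → C} {π : C → ℝ≥0∞}

theorem ae_exists_extension [Infinite V] (hmeas : ∀ e, Measurable (X e))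
    (hind : iIndepFun X μ) (hdist : ∀ e c, μ {ω | X e ω = c} = π c) (hπ : ∀ c, π c ≠ 0)
    (T : Finset V) (c : T → C) :
    ∀ᵐ ω ∂μ, ∃ z ∉ T, ∀ u : T, X s(z, u) ω = c u := by
  let z := T.finite_toSet.infinite_compl.natEmbedding
  have hedge : Injective fun p : ℕ × T => s((z p.1 : V), (p.2 : V)) := by
    rintro ⟨n, u⟩ ⟨n', u'⟩ h
    rcases Sym2.eq_iff.1 h with ⟨h₁, h₂⟩ | ⟨h₁, -⟩
    · exact Prod.ext (z.injective (Subtype.ext h₁)) (Subtype.ext h₂)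
    · exact absurd (h₁ ▸ u'.2) (z n).2
  let A n := ⋂ u : T, (X s((z n : V), (u : V))) ⁻¹' {c u}
  have hAind : iIndepSet A μ :=
    iIndepSet_iInter_preimage (Y := fun n (u : T) => X s((z n : V), (u : V))) (fun _ _ => hmeas _)
      (hind.precomp hedge) fun _ _ => measurableSet_singleton _
  have hAmeas : ∀ n, MeasurableSet (A n) :=
    fun n => .iInter fun u => hmeas _ (measurableSet_singleton _)
  have hμA : ∀ n, μ (A n) = ∏ u, π (c u) := fun n => by
    rw [((hind.precomp hedge).precomp (Prod.mk_right_injective n)).meas_iInter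
      fun u => ⟨{c u}, measurableSet_singleton _, rfl⟩]
    exact Finset.prod_congr rfl fun u _ => hdist _ _
  have hsum : ∑' n, μ (A n) = ∞ := by
    rw [tsum_congr hμA]
    exact ENNReal.tsum_const_eq_top_of_ne_zero (Finset.prod_ne_zero_iff.2 fun u _ => hπ _)
  filter_upwards [ae_frequently_mem_of_iIndepSet hAmeas hAind hsum] with ω hω
  obtain ⟨n, hn⟩ := hω.exists
  exact ⟨z n, (z n).2, fun u => Set.mem_iInter.1 hn u⟩

theorem ae_starInfty [Countable V] [Infinite V] [Countable C] (hmeas : ∀ e, Measurable (X e))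
    (hind : iIndepFun X μ) (hdist : ∀ e c, μ {ω | X e ω = c} = π c) (hπ : ∀ c, π c ≠ 0) :
    ∀ᵐ ω ∂μ, StarInfty fun u v => X s(u, v) ω := by
  have hall : ∀ᵐ ω ∂μ, ∀ Tc : Σ T : Finset V, (T → C),
      ∃ z ∉ Tc.1, ∀ u : Tc.1, X s(z, u) ω = Tc.2 u :=
    ae_all_iff.2 fun Tc => ae_exists_extension hmeas hind hdist hπ Tc.1 Tc.2
  filter_upwards [hall] with ω hω
  exact starInfty_of_forall_finset fun T c => hω ⟨T, c⟩

end Probability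

theorem random_colouring_is_universal_homogeneous_general {V : Type} [Countable V] [Infinite V]
    {Ω : Type*} [MeasurableSpace Ω] (μ : Measure Ω)
    (p : ℝ) (hp0 : 0 < p) (hp1 : p < 1)
    (X : Sym2 V → Ω → ℕ) (hmeas : ∀ e, Measurable (X e))
    (hindep : ProbabilityTheory.iIndepFun X μ)
    (hdist : ∀ (e : Sym2 V) (i : ℕ),
      μ {ω | X e ω = i} = ENNReal.ofReal ((1 - p) ^ i * p)) :
    ∀ᵐ ω ∂μ, StarInfty (fun u v : V => X s(u, v) ω) ∧
      ∀ (W : Type) [Countable W] (ψ : W → W → ℕ), (∀ a b : W, ψ a b = ψ b a) →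
        StarInfty ψ →
        ∃ g : V → W, Function.Bijective g ∧
          ∀ u v : V, u ≠ v → ψ (g u) (g v) = X s(u, v) ω := by
  have hπ (i : ℕ) : ENNReal.ofReal ((1 - p) ^ i * p) ≠ 0 := by
    have : 0 < 1 - p := sub_pos.2 hp1
    exact (ENNReal.ofReal_pos.2 (by positivity)).ne'
  filter_upwards [ae_starInfty hmeas hindep hdist hπ] with ω hω
  exact ⟨hω, fun W _ ψ hψs hψ =>
    exists_bijective_colour_eq_of_starInfty (fun u v => by rw [Sym2.eq_swap]) hω hψs hψ⟩

/-- If the edges of a countably infinite complete graph are independently coloured with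
colours `c₀, c₁, c₂, …` (indexed by `ℕ`), colour `cᵢ` having probability `(1-p)^i · p`,
then almost surely the resulting coloured graph has the `(∗∞)`-property, and hence is
isomorphic to the (unique) countable `C`-coloured graph with the `(∗∞)`-property, i.e.
the universal homogeneous `C`-coloured graph. -/
theorem random_colouring_is_universal_homogeneous {V : Type} [Countable V] [Infinite V]
    {Ω : Type*} [MeasurableSpace Ω] (μ : Measure Ω) [IsProbabilityMeasure μ]
    (p : ℝ) (hp0 : 0 < p) (hp1 : p < 1)
    (X : Sym2 V → Ω → ℕ) (hmeas : ∀ e, Measurable (X e))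
    (hindep : ProbabilityTheory.iIndepFun X μ)
    (hdist : ∀ (e : Sym2 V) (i : ℕ),
      μ {ω | X e ω = i} = ENNReal.ofReal ((1 - p) ^ i * p)) :
    ∀ᵐ ω ∂μ, StarInfty (fun u v : V => X s(u, v) ω) ∧
      ∀ (W : Type) [Countable W] (ψ : W → W → ℕ), (∀ a b : W, ψ a b = ψ b a) →
        StarInfty ψ →
        ∃ g : V → W, Function.Bijective g ∧
          ∀ u v : V, u ≠ v → ψ (g u) (g v) = X s(u, v) ω :=
  random_colouring_is_universal_homogeneous_general μ p hp0 hp1 X hmeas hindep hdist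
end

section
/- Every metric space inducing the universal homogeneous countable echeloned space F is dull; consequently F is not isomorphic to the echeloned space induced by the rational Urysohn space. -/
/-- auxiliary distance-like function on `↥S ⊕ Fin 3` -/
noncomputable def auxD {F : Type} (d : F → F → ℝ) (x x' y y' z z' : F) (S : Finset F) :
    (↥S ⊕ Fin 3) → (↥S ⊕ Fin 3) → ℝ
  | Sum.inl a, Sum.inl b => d a.val b.val
  | Sum.inl _, Sum.inr _ => d x x'
  | Sum.inr _, Sum.inl _ => d x x'
  | Sum.inr i, Sum.inr j =>
      if i = j then 0 else
      if i = 0 ∧ j = 1 ∨ i = 1 ∧ j = 0 then d y y' else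
      if i = 1 ∧ j = 2 ∨ i = 2 ∧ j = 1 then d z z' else d x x'

/-- Every metric space inducing the countable universal homogeneous echeloned space `F`
is dull; consequently `F` is not isomorphic to the echeloned space induced by the
rational Urysohn space (here characterized as a countable metric space with rational
distances satisfying the finite one-point extension property, which is never dull). -/
theorem universal_homogeneous_echeloned_metric_dull {F : Type} [Countable F] [Nonempty F]
    (leF : F × F → F × F → Prop) (hF : IsEcheloned leF)
    (huniv : ∀ (A : Type) [Finite A] [Nonempty A] (leA : A × A → A × A → Prop),
      IsEcheloned leA →
      ∃ e : A → F, Function.Injective e ∧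
        ∀ p q : A × A, leA p q ↔ leF (e p.1, e p.2) (e q.1, e q.2))
    (hhom : ∀ (S : Finset F) (φ : F → F), Set.InjOn φ S →
      (∀ a ∈ S, ∀ b ∈ S, ∀ a' ∈ S, ∀ b' ∈ S,
        (leF (a, b) (a', b') ↔ leF (φ a, φ b) (φ a', φ b'))) →
      ∃ g : F → F, Function.Bijective g ∧
        (∀ p q : F × F, leF p q ↔ leF (g p.1, g p.2) (g q.1, g q.2)) ∧
        ∀ a ∈ S, g a = φ a) :
    (∀ d : F → F → ℝ, IsMetric d → InducesEchelon d leF → IsDull d) ∧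
    (∀ (U : Type) (dU : U → U → ℝ), IsMetric dU → Countable U →
      (∀ x y : U, ∃ q : ℚ, dU x y = (q : ℝ)) →
      (∀ (S : Finset U) (r : U → ℝ),
        (∀ x ∈ S, ∃ q : ℚ, r x = (q : ℝ)) → (∀ x ∈ S, 0 < r x) →
        (∀ x ∈ S, ∀ y ∈ S, |r x - r y| ≤ dU x y ∧ dU x y ≤ r x + r y) →
        ∃ z : U, ∀ x ∈ S, dU z x = r x) →
      ¬ ∃ g : F → U, Function.Bijective g ∧
          ∀ p q : F × F, leF p q ↔ dU (g p.1) (g p.2) ≤ dU (g q.1) (g q.2)) := by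
  classical
  have key : ∀ d : F → F → ℝ, IsMetric d → InducesEchelon d leF → IsDull d := by
    intro d hd hind
    obtain ⟨heq, hdsymm, htri⟩ := hd
    have hnonneg : ∀ a b : F, 0 ≤ d a b := by
      intro a b
      have h0 : d a a = 0 := (heq a a).2 rfl
      have h1 := htri a b a
      rw [h0, hdsymm b a] at h1
      linarith
    have hpos : ∀ a b : F, a ≠ b → 0 < d a b := by
      intro a b hab
      exact lt_of_le_of_ne (hnonneg a b) (fun h => hab ((heq a b).1 h.symm))
    intro x x' y y' z z' hy hz
    by_contra hcon
    push_neg at hcon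
    have hdy : 0 < d y y' := hpos y y' hy
    have hdz : 0 < d z z' := hpos z z' hz
    have hdx : 0 < d x x' := by linarith
    set S : Finset F := {x, x', y, y', z, z'} with hS
    have hxS : x ∈ S := by simp [hS]
    have hx'S : x' ∈ S := by simp [hS]
    have hyS : y ∈ S := by simp [hS]
    have hy'S : y' ∈ S := by simp [hS]
    have hzS : z ∈ S := by simp [hS]
    have hz'S : z' ∈ S := by simp [hS]
    set D := auxD d x x' y y' z z' S with hD
    -- basic facts about D
    have hDdiag : ∀ a, D a a = 0 := by
      rintro (a | i) <;> simp [hD, auxD, (heq _ _).2 rfl]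
    have hDnonneg : ∀ a b, 0 ≤ D a b := by
      rintro (a | i) (b | j) <;> simp only [hD, auxD]
      · exact hnonneg _ _
      · exact le_of_lt hdx
      · exact le_of_lt hdx
      · split_ifs <;> first | rfl | exact le_of_lt hdy | exact le_of_lt hdz | exact le_of_lt hdx
    have hDpos : ∀ a b, a ≠ b → 0 < D a b := by
      rintro (a | i) (b | j) hab <;> simp only [hD, auxD]
      · exact hpos _ _ (fun h => hab (by rw [Subtype.ext h]))
      · exact hdx
      · exact hdx
      · have hij : i ≠ j := fun h => hab (by rw [h])
        rw [if_neg hij]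
        split_ifs <;> first | exact hdy | exact hdz | exact hdx
    have hDsymm : ∀ a b, D a b = D b a := by
      rintro (a | i) (b | j) <;> simp only [hD, auxD]
      · exact hdsymm _ _
      · fin_cases i <;> fin_cases j <;> rfl
    -- the echeloned structure on ↥S ⊕ Fin 3
    set leA : (↥S ⊕ Fin 3) × (↥S ⊕ Fin 3) → (↥S ⊕ Fin 3) × (↥S ⊕ Fin 3) → Prop :=
      fun p q => D p.1 p.2 ≤ D q.1 q.2 with hleA
    have hAech : IsEcheloned leA := by
      refine ⟨fun p => le_refl _, fun p q r => le_trans, fun p q => le_total _ _, ?_, ?_, ?_⟩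
      · intro a b c
        show D a a ≤ D b c
        rw [hDdiag]; exact hDnonneg _ _
      · intro a b c h
        by_contra hbc
        have := hDpos b c hbc
        have h2 : D b c ≤ D a a := h
        rw [hDdiag a] at h2
        linarith
      · intro a b
        show D a b ≤ D b a
        rw [hDsymm]
    haveI : Nonempty (↥S ⊕ Fin 3) := ⟨Sum.inr 0⟩
    obtain ⟨e, he_inj, he_pres⟩ := huniv (↥S ⊕ Fin 3) leA hAech
    -- partial map φ
    set φ : F → F := fun f =>
      if h : ∃ a : ↥S, e (Sum.inl a) = f then h.choose.val else f with hφ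
    have hφval : ∀ α : ↥S, φ (e (Sum.inl α)) = α.val := by
      intro α
      have h : ∃ a : ↥S, e (Sum.inl a) = e (Sum.inl α) := ⟨α, rfl⟩
      have h2 : (Sum.inl h.choose : ↥S ⊕ Fin 3) = Sum.inl α := he_inj h.choose_spec
      rw [Sum.inl.injEq] at h2
      simp only [hφ, dif_pos h, h2]
    set S' : Finset F := Finset.image (fun a : ↥S => e (Sum.inl a)) S.attach with hS'
    have hS'mem : ∀ b ∈ S', ∃ α : ↥S, e (Sum.inl α) = b := by
      intro b hb
      simp only [hS', Finset.mem_image] at hb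
      obtain ⟨α, _, hα⟩ := hb
      exact ⟨α, hα⟩
    have hS'mem' : ∀ α : ↥S, e (Sum.inl α) ∈ S' := by
      intro α
      simp only [hS', Finset.mem_image]
      exact ⟨α, S.mem_attach α, rfl⟩
    have hinjOn : Set.InjOn φ S' := by
      intro a ha b hb hab
      obtain ⟨α, rfl⟩ := hS'mem a ha
      obtain ⟨β, rfl⟩ := hS'mem b hb
      rw [hφval α, hφval β] at hab
      rw [Subtype.ext hab]
    have hpresφ : ∀ a ∈ S', ∀ b ∈ S', ∀ a' ∈ S', ∀ b' ∈ S',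
        (leF (a, b) (a', b') ↔ leF (φ a, φ b) (φ a', φ b')) := by
      intro a ha b hb a' ha' b' hb'
      obtain ⟨α, rfl⟩ := hS'mem a ha
      obtain ⟨β, rfl⟩ := hS'mem b hb
      obtain ⟨α', rfl⟩ := hS'mem a' ha'
      obtain ⟨β', rfl⟩ := hS'mem b' hb'
      rw [hφval α, hφval β, hφval α', hφval β']
      rw [← he_pres (Sum.inl α, Sum.inl β) (Sum.inl α', Sum.inl β')]
      rw [hind (α.val, β.val) (α'.val, β'.val)]
      rfl
    obtain ⟨g, _, gpres, gfix⟩ := hhom S' φ hinjOn hpresφ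
    have gfixval : ∀ α : ↥S, g (e (Sum.inl α)) = α.val := by
      intro α
      rw [gfix _ (hS'mem' α), hφval α]
    set u0 := g (e (Sum.inr 0)) with hu0
    set u1 := g (e (Sum.inr 1)) with hu1
    set u2 := g (e (Sum.inr 2)) with hu2
    -- key claim machine
    have transfer : ∀ (p q : (↥S ⊕ Fin 3) × (↥S ⊕ Fin 3)), D p.1 p.2 ≤ D q.1 q.2 →
        d (g (e p.1)) (g (e p.2)) ≤ d (g (e q.1)) (g (e q.2)) := by
      intro p q h
      have h1 : leF (e p.1, e p.2) (e q.1, e q.2) := (he_pres p q).1 h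
      have h2 := (gpres (e p.1, e p.2) (e q.1, e q.2)).1 h1
      exact (hind _ _).1 h2
    have c1 : d u0 u1 ≤ d y y' := by
      have := transfer (Sum.inr 0, Sum.inr 1) (Sum.inl ⟨y, hyS⟩, Sum.inl ⟨y', hy'S⟩)
        (le_of_eq rfl)
      rwa [gfixval, gfixval] at this
    have c2 : d u1 u2 ≤ d z z' := by
      have := transfer (Sum.inr 1, Sum.inr 2) (Sum.inl ⟨z, hzS⟩, Sum.inl ⟨z', hz'S⟩)
        (le_of_eq rfl)
      rwa [gfixval, gfixval] at this
    have c3 : d x x' ≤ d u0 u2 := by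
      have := transfer (Sum.inl ⟨x, hxS⟩, Sum.inl ⟨x', hx'S⟩) (Sum.inr 0, Sum.inr 2)
        (le_of_eq rfl)
      rwa [gfixval, gfixval] at this
    have := htri u0 u1 u2
    linarith
  refine ⟨key, ?_⟩
  intro U dU hU hcount hrat hext ⟨g, gbij, gpres⟩
  obtain ⟨heqU, hsymmU, htriU⟩ := hU
  -- pull back dU to F
  set d : F → F → ℝ := fun a b => dU (g a) (g b) with hd
  have hmet : IsMetric d := by
    refine ⟨fun a b => ?_, fun a b => hsymmU _ _, fun a b c => htriU _ _ _⟩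
    rw [heqU]
    exact ⟨fun h => gbij.injective h, fun h => by rw [h]⟩
  have hdull : IsDull d := key d hmet (fun p q => gpres p q)
  -- now derive a contradiction using the extension property
  have hU0 : U := g (Classical.arbitrary F)
  have h00 : dU hU0 hU0 = 0 := (heqU _ _).2 rfl
  have hone : ∀ c : ℚ, (0:ℝ) < (c:ℝ) → ∃ w : U, dU w hU0 = (c:ℝ) := by
    intro c hc
    have := hext {hU0} (fun _ => (c:ℝ)) (fun x _ => ⟨c, rfl⟩) (fun x _ => hc) ?_
    · obtain ⟨w, hw⟩ := this
      exact ⟨w, hw hU0 (Finset.mem_singleton_self _)⟩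
    · intro a ha b hb
      rw [Finset.mem_singleton] at ha hb
      subst ha; subst hb
      rw [h00]
      constructor <;> [skip; linarith]
      simp
    
  obtain ⟨w1, hw1⟩ := hone 1 (by norm_num)
  obtain ⟨w2, hw2⟩ := hone (1/4) (by norm_num)
  have hw2ne : w2 ≠ hU0 := by
    intro h
    rw [h, h00] at hw2
    norm_num at hw2
  obtain ⟨a, ha⟩ := gbij.surjective w1
  obtain ⟨a', ha'⟩ := gbij.surjective hU0
  obtain ⟨b, hb⟩ := gbij.surjective w2
  obtain ⟨b', hb'⟩ := gbij.surjective hU0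
  have hbb' : b ≠ b' := by
    intro h
    rw [h, hb'] at hb
    exact hw2ne hb.symm
  have := hdull a a' b b' b b' hbb' hbb'
  simp only [hd, ha, ha', hb, hb'] at this
  rw [hw1, hw2] at this
  norm_num at this
end
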